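/- Let f be a harmonic mapping in the unit disk D with finite Bloch number β = sup_{z ∈ D} (1−|z|²) Λ_f(z). Then for every r ∈ (0,1), (1/2π) ∫_0^{2π} |f(re^{iθ}) − f(0)|² dθ ≤ β² ∑_{n=1}^∞ r^{2n}/n = β² log(1/(1−r²)). -/

import Mathlib

open Complex MeasureTheory Metric Set Real
open scoped ENNReal

/-- The Wirtinger derivative `f_z = (f_x - i f_y)/2` of `f` at `z`
(real Fréchet derivative applied to the directions `1` and `i`). -/
noncomputable def wirtingerZ (f : ℂ → ℂ) (z : ℂ) : ℂ :=
  (fderiv ℝ f z 1 - Complex.I * fderiv ℝ f z Complex.I) / 2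

/-- The Wirtinger derivative `f_z̄ = (f_x + i f_y)/2` of `f` at `z`. -/
noncomputable def wirtingerZbar (f : ℂ → ℂ) (z : ℂ) : ℂ :=
  (fderiv ℝ f z 1 + Complex.I * fderiv ℝ f z Complex.I) / 2

/-- `Λ_f(z) = |f_z(z)| + |f_z̄(z)|`. -/
noncomputable def Lam (f : ℂ → ℂ) (z : ℂ) : ℝ :=
  ‖wirtingerZ f z‖ + ‖wirtingerZbar f z‖

/-- A complex-valued function is harmonic on a set: it is `C²` there and its
Laplacian `f_xx + f_yy` vanishes (equivalently, its real and imaginary parts are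
real harmonic). -/
def IsHarmonicOn (f : ℂ → ℂ) (s : Set ℂ) : Prop :=
  ContDiffOn ℝ 2 f s ∧ ∀ z ∈ s,
    fderiv ℝ (fun w => fderiv ℝ f w 1) z 1
      + fderiv ℝ (fun w => fderiv ℝ f w Complex.I) z Complex.I = 0

/-- A majorant: a continuous increasing function `ω : [0,∞) → [0,∞)` with
`ω 0 = 0` such that `ω t / t` is non-increasing for `t > 0`. -/
def IsMajorant (ω : ℝ → ℝ) : Prop :=
  ContinuousOn ω (Ici 0) ∧ MonotoneOn ω (Ici 0) ∧ ω 0 = 0 ∧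
    ∀ s t : ℝ, 0 < s → s ≤ t → ω t / t ≤ ω s / s

/-! Let `u = |f - f(0)|²` and let `M(r)` be its mean over the circle of radius `r`. The polar
form of the Laplacian gives `(r M'(r))' = r · mean_r(Δu)`, and for harmonic `f` one has
`Δu = 2(|f_x|² + |f_y|²) = 4(|f_z|² + |f_z̄|²) ≤ 4 Λ_f² ≤ 4β² / (1 - r²)²` on that circle.
Integrating twice from `0`, where `r M'(r)` vanishes and `M(0) = 0`, gives
`r M'(r) ≤ 2β² r² / (1 - r²)` and then `M(r) ≤ β² log (1 / (1 - r²))`; the series is the Taylor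
expansion of `-log (1 - r²)`. -/

open scoped Laplacian RealInnerProductSpace

theorem le_of_hasDerivAt_le {F G F' G' : ℝ → ℝ} {a b : ℝ} (hab : a ≤ b)
    (hF : ContinuousOn F (Icc a b)) (hG : ContinuousOn G (Icc a b))
    (hF' : ∀ x ∈ Ioo a b, HasDerivAt F (F' x) x) (hG' : ∀ x ∈ Ioo a b, HasDerivAt G (G' x) x)
    (hle : ∀ x ∈ Ioo a b, F' x ≤ G' x) (ha : F a ≤ G a) : F b ≤ G b := by
  have hmono : MonotoneOn (fun x => G x - F x) (Icc a b) := by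
    refine monotoneOn_of_hasDerivWithinAt_nonneg (convex_Icc a b) (hG.sub hF)
      (f' := fun x => G' x - F' x) ?_ ?_
    · intro x hx
      rw [interior_Icc] at hx
      exact ((hG' x hx).sub (hF' x hx)).hasDerivWithinAt
    · intro x hx
      rw [interior_Icc] at hx
      exact sub_nonneg.mpr (hle x hx)
  have := hmono (left_mem_Icc.mpr hab) (right_mem_Icc.mpr hab) hab
  dsimp only at this
  linarith

theorem hasDerivAt_intervalIntegral_of_continuousOn {E : Type*} [NormedAddCommGroup E]
    [NormedSpace ℝ E] {F F' : ℝ → ℝ → E} {a b x₀ δ : ℝ} (hδ : 0 < δ)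
    (hF : ContinuousOn (Function.uncurry F) (closedBall x₀ δ ×ˢ univ))
    (hF'c : ContinuousOn (Function.uncurry F') (closedBall x₀ δ ×ˢ univ))
    (hF' : ∀ x ∈ ball x₀ δ, ∀ t, HasDerivAt (fun x => F x t) (F' x t) x) :
    HasDerivAt (fun x => ∫ t in a..b, F x t) (∫ t in a..b, F' x₀ t) x₀ := by
  have slice : ∀ {G : ℝ → ℝ → E}, ContinuousOn (Function.uncurry G) (closedBall x₀ δ ×ˢ univ) →
      ∀ x ∈ closedBall x₀ δ, Continuous (G x) := fun hG x hx =>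
    hG.comp_continuous (Continuous.prodMk_right x) fun t => ⟨hx, mem_univ t⟩
  have hx₀ : x₀ ∈ closedBall x₀ δ := mem_closedBall_self hδ.le
  obtain ⟨M, hM⟩ := (isCompact_closedBall x₀ δ |>.prod (isCompact_uIcc (a := a) (b := b)))
    |>.exists_bound_of_continuousOn (hF'c.mono (prod_mono_right (subset_univ _)))
  refine (intervalIntegral.hasDerivAt_integral_of_dominated_loc_of_deriv_le (bound := fun _ => M)
    (ball_mem_nhds x₀ hδ) ?_ ((slice hF x₀ hx₀).intervalIntegrable a b)
    (slice hF'c x₀ hx₀).aestronglyMeasurable ?_ intervalIntegrable_const ?_).2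
  · filter_upwards [ball_mem_nhds x₀ hδ] with x hx
    exact (slice hF x (ball_subset_closedBall hx)).aestronglyMeasurable
  · exact Filter.Eventually.of_forall fun t ht x hx =>
      hM (x, t) ⟨ball_subset_closedBall hx, uIoc_subset_uIcc ht⟩
  · exact Filter.Eventually.of_forall fun t _ x hx => hF' x hx t

/-- The Euler operator `r ∂ᵣ u = z · ∇u`. -/
noncomputable def euler (u : ℂ → ℝ) (z : ℂ) : ℝ := fderiv ℝ u z z

/-- `∂²u/∂θ²` at `z = r e^{iθ}`. -/
noncomputable def angularSecondDeriv (u : ℂ → ℝ) (z : ℂ) : ℝ :=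
  fderiv ℝ (fderiv ℝ u) z (z * I) (z * I) - euler u z

theorem hasDerivAt_circleMap_radius (θ x : ℝ) :
    HasDerivAt (fun x : ℝ => circleMap 0 x θ) (circleMap 0 1 θ) x := by
  simpa [circleMap] using (Complex.ofRealCLM.hasDerivAt (x := x)).mul_const (exp (θ * I))

theorem circleMap_zero_eq_smul (x θ : ℝ) : circleMap 0 x θ = x • circleMap 0 1 θ := by
  simp [circleMap, Complex.real_smul]

theorem circleMap_mem_ball {R x : ℝ} (hx : |x| < R) (θ : ℝ) : circleMap 0 x θ ∈ ball 0 R := by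
  rwa [mem_ball_zero_iff, norm_circleMap_zero]

theorem hasDerivAt_circleAverage_radius {w : ℂ → ℝ} {R x : ℝ}
    (hw : ContDiffOn ℝ 1 w (ball 0 R)) (hx0 : x ≠ 0) (hx : |x| < R) :
    HasDerivAt (circleAverage w 0) (x⁻¹ * circleAverage (euler w) 0 x) x := by
  set δ := (R - |x|) / 2 with hδ
  have hmaps : ∀ p ∈ closedBall x δ ×ˢ (univ : Set ℝ), circleMap 0 p.1 p.2 ∈ ball 0 R := by
    rintro ⟨y, θ⟩ ⟨hy, -⟩
    rw [mem_closedBall, Real.dist_eq] at hy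
    exact circleMap_mem_ball (by linarith [abs_sub_abs_le_abs_sub y x]) θ
  have hDw := hw.continuousOn_fderiv_of_isOpen isOpen_ball le_rfl
  have h := hasDerivAt_intervalIntegral_of_continuousOn (a := 0) (b := 2 * π)
    (F := fun y θ => w (circleMap 0 y θ))
    (F' := fun y θ => fderiv ℝ w (circleMap 0 y θ) (circleMap 0 1 θ)) (half_pos (by linarith))
    (hw.continuousOn.comp circleMap.continuous.continuousOn hmaps)
    ((hDw.comp circleMap.continuous.continuousOn hmaps).clm_apply (by fun_prop))
    (fun y hy θ => ?_)
  · refine HasDerivAt.congr_deriv (f := circleAverage w 0) (h.const_smul (2 * π)⁻¹) ?_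
    simp only [circleAverage_def, smul_eq_mul, ← intervalIntegral.integral_const_mul]
    congr 1 with θ
    rw [euler, circleMap_zero_eq_smul x θ, map_smul, smul_eq_mul]
    field_simp
  · have hmem := hmaps (y, θ) ⟨ball_subset_closedBall hy, mem_univ θ⟩
    exact ((hw.differentiableOn one_ne_zero _ hmem).differentiableAt
      (isOpen_ball.mem_nhds hmem)).hasFDerivAt.comp_hasDerivAt y (hasDerivAt_circleMap_radius θ y)

theorem laplacian_eq_fderiv_fderiv {F : Type*} [NormedAddCommGroup F] [NormedSpace ℝ F]
    (u : ℂ → F) (z : ℂ) :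
    Δ u z = fderiv ℝ (fderiv ℝ u) z 1 1 + fderiv ℝ (fderiv ℝ u) z I I := by
  simp [InnerProductSpace.laplacian_eq_iteratedFDeriv_complexPlane, iteratedFDeriv_two_apply]

/-- `z` and `z i` are orthogonal of length `|z|`, so the left side is `|z|²` times the trace. -/
theorem bilinear_add_bilinear_mul_I (B : ℂ →L[ℝ] ℂ →L[ℝ] ℝ) (z : ℂ) :
    B z z + B (z * I) (z * I) = ‖z‖ ^ 2 * (B 1 1 + B I I) := by
  have key : ∀ a b : ℝ,
      B (a • 1 + b • I) (a • 1 + b • I) + B ((-b) • 1 + a • I) ((-b) • 1 + a • I)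
        = (a ^ 2 + b ^ 2) * (B 1 1 + B I I) := by
    intro a b
    simp only [map_add, map_smul, add_apply, smul_apply, smul_eq_mul]
    ring
  have hz : z.re • (1 : ℂ) + z.im • I = z := by simp [Complex.real_smul, Complex.re_add_im]
  have hzI : (-z.im) • (1 : ℂ) + z.re • I = z * I := by apply Complex.ext <;> simp
  rw [Complex.sq_norm, Complex.normSq_apply, ← sq, ← sq, ← key, hz, hzI]

theorem ContDiffOn.hasFDerivAt_fderiv {E F : Type*} [NormedAddCommGroup E] [NormedSpace ℝ E]
    [NormedAddCommGroup F] [NormedSpace ℝ F] {u : E → F} {s : Set E} {z : E}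
    (hu : ContDiffOn ℝ 2 u s) (hs : IsOpen s) (hz : z ∈ s) :
    HasFDerivAt (fderiv ℝ u) (fderiv ℝ (fderiv ℝ u) z) z :=
  (((hu.fderiv_of_isOpen hs (m := 1) (by norm_num)).differentiableOn one_ne_zero) z hz
    |>.differentiableAt (hs.mem_nhds hz)).hasFDerivAt

section Polar

variable {u : ℂ → ℝ} {s : Set ℂ} {z : ℂ} {R x : ℝ}

theorem ContDiffOn.continuousOn_fderiv_fderiv (hu : ContDiffOn ℝ 2 u s) (hs : IsOpen s) :
    ContinuousOn (fderiv ℝ (fderiv ℝ u)) s :=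
  (hu.fderiv_of_isOpen hs (m := 1) (by norm_num)).continuousOn_fderiv_of_isOpen hs le_rfl

theorem ContDiffOn.continuousOn_laplacian (hu : ContDiffOn ℝ 2 u s) (hs : IsOpen s) :
    ContinuousOn (Δ u) s := by
  have h := hu.continuousOn_fderiv_fderiv hs
  rw [show Δ u = _ from funext (laplacian_eq_fderiv_fderiv u)]
  exact ((h.clm_apply continuousOn_const).clm_apply continuousOn_const).add
    ((h.clm_apply continuousOn_const).clm_apply continuousOn_const)

theorem ContDiffOn.euler (hu : ContDiffOn ℝ 2 u s) (hs : IsOpen s) :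
    ContDiffOn ℝ 1 (euler u) s :=
  (hu.fderiv_of_isOpen hs (by norm_num)).clm_apply contDiffOn_id

theorem ContDiffOn.continuousOn_angularSecondDeriv (hu : ContDiffOn ℝ 2 u s) (hs : IsOpen s) :
    ContinuousOn (angularSecondDeriv u) s :=
  (((hu.continuousOn_fderiv_fderiv hs).clm_apply (by fun_prop)).clm_apply (by fun_prop)).sub
    (hu.euler hs).continuousOn

theorem euler_euler (hu : ContDiffOn ℝ 2 u s) (hs : IsOpen s) (hz : z ∈ s) :
    euler (euler u) z = fderiv ℝ (fderiv ℝ u) z z z + euler u z := by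
  have h : HasFDerivAt (euler u) _ z := (hu.hasFDerivAt_fderiv hs hz).clm_apply (hasFDerivAt_id z)
  rw [euler, h.fderiv]
  simp [euler, add_comm]

/-- The polar form `r² Δ = (r ∂ᵣ)² + ∂²_θ` of the Laplacian. -/
theorem euler_euler_add_angularSecondDeriv (hu : ContDiffOn ℝ 2 u s) (hs : IsOpen s)
    (hz : z ∈ s) : euler (euler u) z + angularSecondDeriv u z = ‖z‖ ^ 2 * Δ u z := by
  rw [euler_euler hu hs hz, angularSecondDeriv, laplacian_eq_fderiv_fderiv,
    ← bilinear_add_bilinear_mul_I]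
  ring

/-- `angularSecondDeriv u` is the `θ`-derivative of the periodic `θ ↦ u'(z)(i z)`. -/
theorem circleAverage_angularSecondDeriv (hu : ContDiffOn ℝ 2 u (ball 0 R)) (hx : |x| < R) :
    circleAverage (angularSecondDeriv u) 0 x = 0 := by
  have hderiv : ∀ θ, HasDerivAt (fun θ => fderiv ℝ u (circleMap 0 x θ) (circleMap 0 x θ * I))
      (angularSecondDeriv u (circleMap 0 x θ)) θ := by
    intro θ
    have h := ((hu.hasFDerivAt_fderiv isOpen_ball (circleMap_mem_ball hx θ)).comp_hasDerivAt θ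
      (hasDerivAt_circleMap 0 x θ)).clm_apply ((hasDerivAt_circleMap 0 x θ).mul_const I)
    refine h.congr_deriv ?_
    rw [mul_assoc, I_mul_I, mul_neg_one, map_neg, angularSecondDeriv, sub_eq_add_neg]
    rfl
  rw [circleAverage_def, intervalIntegral.integral_eq_sub_of_hasDerivAt (fun θ _ => hderiv θ)
    ((hu.continuousOn_angularSecondDeriv isOpen_ball).mono
      (sphere_subset_ball hx)).circleIntegrable',
    (periodic_circleMap 0 x).eq, sub_self, smul_zero]

theorem circleAverage_euler_euler (hu : ContDiffOn ℝ 2 u (ball 0 R)) (hx : |x| < R) :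
    circleAverage (euler (euler u)) 0 x = x ^ 2 * circleAverage (Δ u) 0 x := by
  have hsph := sphere_subset_ball (x := (0 : ℂ)) hx
  have hpolar : EqOn (euler (euler u)) (fun z => x ^ 2 * Δ u z - angularSecondDeriv u z)
      (sphere 0 |x|) := by
    intro z hz
    have hnorm : ‖z‖ ^ 2 = x ^ 2 := by rw [mem_sphere_zero_iff_norm.mp hz, sq_abs]
    have := euler_euler_add_angularSecondDeriv hu isOpen_ball (hsph hz)
    rw [hnorm] at this
    dsimp only
    linarith
  have hcontΔ : ContinuousOn (fun z => x ^ 2 * Δ u z) (ball 0 R) :=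
    continuousOn_const.mul (hu.continuousOn_laplacian isOpen_ball)
  rw [circleAverage_congr_sphere hpolar, circleAverage_fun_sub (hcontΔ.mono hsph).circleIntegrable'
    ((hu.continuousOn_angularSecondDeriv isOpen_ball).mono hsph).circleIntegrable',
    circleAverage_angularSecondDeriv hu hx, sub_zero]
  exact circleAverage_fun_smul (𝕜 := ℝ)

theorem hasDerivAt_circleAverage_euler (hu : ContDiffOn ℝ 2 u (ball 0 R)) (hx0 : x ≠ 0)
    (hx : |x| < R) :
    HasDerivAt (circleAverage (euler u) 0) (x * circleAverage (Δ u) 0 x) x := by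
  convert hasDerivAt_circleAverage_radius (hu.euler isOpen_ball) hx0 hx using 1
  rw [circleAverage_euler_euler hu hx]
  field_simp

end Polar

section Comparison

variable {u : ℂ → ℝ} {K : ℝ}

theorem continuousOn_circleAverage_Icc {w : ℂ → ℝ} (hw : ContinuousOn w (ball 0 1)) {r : ℝ}
    (hr : r < 1) : ContinuousOn (circleAverage w 0) (Icc 0 r) :=
  (hw.mono fun z hz => mem_ball_zero_iff.mpr (by simpa using hz.2.trans_lt hr)).circleAverage
    fun _ hy => hy.1

theorem circleAverage_le_of_le_sphere {w : ℂ → ℝ} (hw : ContinuousOn w (ball 0 1)) {x C : ℝ}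
    (hx : |x| < 1) (h : ∀ z ∈ ball (0 : ℂ) 1, ‖z‖ = |x| → w z ≤ C) :
    circleAverage w 0 x ≤ C :=
  circleAverage_mono_on_of_le_circle ((hw.mono (sphere_subset_ball hx)).circleIntegrable')
    fun z hz => h z (sphere_subset_ball hx hz) (mem_sphere_zero_iff_norm.mp hz)

theorem circleAverage_euler_le (hu : ContDiffOn ℝ 2 u (ball 0 1))
    (hΔ : ∀ z ∈ ball (0 : ℂ) 1, Δ u z ≤ 4 * K / (1 - ‖z‖ ^ 2) ^ 2) {r : ℝ} (hr0 : 0 ≤ r)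
    (hr1 : r < 1) : circleAverage (euler u) 0 r ≤ 2 * K * (r ^ 2 / (1 - r ^ 2)) := by
  have hG : ∀ y ∈ Icc 0 r, HasDerivAt (fun y => 2 * K * (y ^ 2 / (1 - y ^ 2)))
      (y * (4 * K / (1 - y ^ 2) ^ 2)) y := by
    intro y hy
    have hy1 : 1 - y ^ 2 ≠ 0 := by nlinarith [hy.1, hy.2]
    refine (((hasDerivAt_pow 2 y).div ((hasDerivAt_pow 2 y).const_sub 1) hy1).const_mul
      (2 * K)).congr_deriv ?_
    field_simp
    ring
  refine le_of_hasDerivAt_le hr0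
    (continuousOn_circleAverage_Icc (hu.euler isOpen_ball).continuousOn hr1)
    (fun y hy => (hG y hy).continuousAt.continuousWithinAt)
    (fun y hy => hasDerivAt_circleAverage_euler hu hy.1.ne'
      (by rw [abs_of_pos hy.1]; linarith [hy.2]))
    (fun y hy => hG y (Ioo_subset_Icc_self hy)) ?_ (by simp [euler])
  intro y hy
  have hy1 : |y| < 1 := by rw [abs_of_pos hy.1]; linarith [hy.2]
  refine mul_le_mul_of_nonneg_left (circleAverage_le_of_le_sphere
    (hu.continuousOn_laplacian isOpen_ball) hy1 fun z hz hzy => ?_) hy.1.le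
  have := hΔ z hz
  rwa [hzy, sq_abs] at this

theorem circleAverage_le_of_laplacian_le (hu : ContDiffOn ℝ 2 u (ball 0 1))
    (hΔ : ∀ z ∈ ball (0 : ℂ) 1, Δ u z ≤ 4 * K / (1 - ‖z‖ ^ 2) ^ 2) {r : ℝ} (hr0 : 0 ≤ r)
    (hr1 : r < 1) : circleAverage u 0 r ≤ u 0 + K * Real.log (1 / (1 - r ^ 2)) := by
  have hG : ∀ y ∈ Icc 0 r, HasDerivAt (fun y => u 0 + K * Real.log (1 / (1 - y ^ 2)))
      (y⁻¹ * (2 * K * (y ^ 2 / (1 - y ^ 2)))) y := by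
    intro y hy
    have hy1 : 1 - y ^ 2 ≠ 0 := by nlinarith [hy.1, hy.2]
    simp only [one_div]
    refine (((((hasDerivAt_pow 2 y).const_sub 1).inv hy1).log (inv_ne_zero hy1)).const_mul
      K |>.const_add (u 0)).congr_deriv ?_
    simp only [Pi.inv_apply]
    field_simp
    ring
  refine le_of_hasDerivAt_le hr0
    (continuousOn_circleAverage_Icc hu.continuousOn hr1)
    (fun y hy => (hG y hy).continuousAt.continuousWithinAt)
    (fun y hy => hasDerivAt_circleAverage_radius (hu.of_le one_le_two) hy.1.ne'
      (by rw [abs_of_pos hy.1]; linarith [hy.2]))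
    (fun y hy => hG y (Ioo_subset_Icc_self hy)) ?_ (by simp)
  intro y hy
  exact mul_le_mul_of_nonneg_left (circleAverage_euler_le hu hΔ hy.1.le (hy.2.trans hr1))
    (inv_nonneg.mpr hy.1.le)

end Comparison

theorem fderiv_fderiv_norm_sub_sq {V E : Type*} [NormedAddCommGroup V] [NormedSpace ℝ V]
    [NormedAddCommGroup E] [InnerProductSpace ℝ E] {f : V → E} {s : Set V}
    (hf : ContDiffOn ℝ 2 f s) (hs : IsOpen s) {z : V} (hz : z ∈ s) (c : E) (a b : V) :
    fderiv ℝ (fderiv ℝ fun w => ‖f w - c‖ ^ 2) z a b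
      = 2 * (⟪fderiv ℝ f z a, fderiv ℝ f z b⟫ + ⟪f z - c, fderiv ℝ (fderiv ℝ f) z a b⟫) := by
  have hf1 : ∀ w ∈ s, HasFDerivAt f (fderiv ℝ f w) w := fun w hw =>
    ((hf.differentiableOn two_ne_zero w hw).differentiableAt (hs.mem_nhds hw)).hasFDerivAt
  have hu : ContDiffOn ℝ 2 (fun w => ‖f w - c‖ ^ 2) s := (hf.sub contDiffOn_const).norm_sq ℝ
  have hDu : ∀ w ∈ s, fderiv ℝ (fun w => ‖f w - c‖ ^ 2) w b = 2 * ⟪f w - c, fderiv ℝ f w b⟫ := by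
    intro w hw
    rw [((hf1 w hw).sub_const c).norm_sq.fderiv]
    simp [inner_sub_left]
  have h1 := (hu.hasFDerivAt_fderiv hs hz).clm_apply (hasFDerivAt_const b z)
  have h2 := (((hf1 z hz).sub_const c).inner ℝ
    ((hf.hasFDerivAt_fderiv hs hz).clm_apply (hasFDerivAt_const b z))).const_mul 2
  have h3 := h2.congr_of_eventuallyEq (Filter.eventually_of_mem (hs.mem_nhds hz) hDu)
  have := congrArg (· a) (h1.unique h3)
  simp only [ContinuousLinearMap.comp_zero, zero_add, ContinuousLinearMap.flip_apply, smul_apply,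
    ContinuousLinearMap.comp_apply, ContinuousLinearMap.prod_apply, fderivInnerCLM_apply,
    smul_eq_mul] at this
  rw [this]
  ring

section Harmonic

variable {f : ℂ → ℂ} {s : Set ℂ} {z : ℂ}

theorem IsHarmonicOn.laplacian_eq_zero (hf : IsHarmonicOn f s) (hs : IsOpen s) (hz : z ∈ s) :
    Δ f z = 0 := by
  have hpartial : ∀ v w : ℂ, fderiv ℝ (fun y => fderiv ℝ f y v) z w
      = fderiv ℝ (fderiv ℝ f) z w v := fun v w => by
    rw [((hf.1.hasFDerivAt_fderiv hs hz).clm_apply (hasFDerivAt_const v z)).fderiv]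
    simp
  rw [laplacian_eq_fderiv_fderiv, ← hpartial, ← hpartial]
  exact hf.2 z hz

theorem IsHarmonicOn.laplacian_norm_sub_sq (hf : IsHarmonicOn f s) (hs : IsOpen s) (hz : z ∈ s)
    (c : ℂ) : Δ (fun w => ‖f w - c‖ ^ 2) z
      = 2 * (‖fderiv ℝ f z 1‖ ^ 2 + ‖fderiv ℝ f z I‖ ^ 2) := by
  have hΔ := hf.laplacian_eq_zero hs hz
  rw [laplacian_eq_fderiv_fderiv] at hΔ
  rw [laplacian_eq_fderiv_fderiv, fderiv_fderiv_norm_sub_sq hf.1 hs hz,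
    fderiv_fderiv_norm_sub_sq hf.1 hs hz, real_inner_self_eq_norm_sq, real_inner_self_eq_norm_sq]
  have : ⟪f z - c, fderiv ℝ (fderiv ℝ f) z 1 1⟫ + ⟪f z - c, fderiv ℝ (fderiv ℝ f) z I I⟫ = 0 := by
    rw [← inner_add_right, hΔ, inner_zero_right]
  linarith

theorem sq_norm_fderiv_one_add_sq_norm_fderiv_I (f : ℂ → ℂ) (z : ℂ) :
    ‖fderiv ℝ f z 1‖ ^ 2 + ‖fderiv ℝ f z I‖ ^ 2
      = 2 * (‖wirtingerZ f z‖ ^ 2 + ‖wirtingerZbar f z‖ ^ 2) := by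
  have h := parallelogram_law_with_norm ℝ (fderiv ℝ f z 1) (I * fderiv ℝ f z I)
  rw [norm_mul, Complex.norm_I, one_mul] at h
  simp only [wirtingerZ, wirtingerZbar, norm_div, Complex.norm_ofNat]
  nlinarith [h]

theorem sq_norm_wirtingerZ_add_sq_norm_wirtingerZbar_le (f : ℂ → ℂ) (z : ℂ) :
    ‖wirtingerZ f z‖ ^ 2 + ‖wirtingerZbar f z‖ ^ 2 ≤ Lam f z ^ 2 := by
  rw [Lam]
  nlinarith [norm_nonneg (wirtingerZ f z), norm_nonneg (wirtingerZbar f z)]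

theorem laplacian_norm_sub_sq_le_of_bloch (hf : IsHarmonicOn f (ball 0 1)) {β : ℝ}
    (hβ : ∀ z ∈ ball (0 : ℂ) 1, (1 - ‖z‖ ^ 2) * Lam f z ≤ β) (c : ℂ) (hz : z ∈ ball (0 : ℂ) 1) :
    Δ (fun w => ‖f w - c‖ ^ 2) z ≤ 4 * β ^ 2 / (1 - ‖z‖ ^ 2) ^ 2 := by
  have hd : 0 < 1 - ‖z‖ ^ 2 := by
    have := mem_ball_zero_iff.mp hz
    nlinarith [norm_nonneg z]
  have hΛ : ((1 - ‖z‖ ^ 2) * Lam f z) ^ 2 ≤ β ^ 2 :=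
    pow_le_pow_left₀ (mul_nonneg hd.le (by unfold Lam; positivity)) (hβ z hz) 2
  rw [hf.laplacian_norm_sub_sq isOpen_ball hz, sq_norm_fderiv_one_add_sq_norm_fderiv_I,
    le_div_iff₀ (by positivity)]
  nlinarith [sq_norm_wirtingerZ_add_sq_norm_wirtingerZbar_le f z, sq_nonneg (1 - ‖z‖ ^ 2)]

end Harmonic

theorem tsum_pow_two_mul_div_eq_log {r : ℝ} (hr : |r| < 1) :
    ∑' n : ℕ, r ^ (2 * (n + 1)) / ((n : ℝ) + 1) = Real.log (1 / (1 - r ^ 2)) := by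
  have hr2 : |r ^ 2| < 1 := by rw [abs_pow]; exact pow_lt_one₀ (abs_nonneg r) hr two_ne_zero
  simp only [pow_mul, one_div, Real.log_inv]
  exact (hasSum_pow_div_log_of_abs_lt_one hr2).tsum_eq

/-- let `f` be harmonic in the unit disk with Bloch number bounded
by `β`, i.e. `(1-|z|²) Λ_f(z) ≤ β` on `𝔻`. Then for every `r ∈ (0,1)`,
`(1/2π) ∫₀^{2π} |f(re^{iθ}) - f(0)|² dθ ≤ β² ∑_{n=1}^∞ r^{2n}/n = β² log(1/(1-r²))`. -/
theorem stmt19 (f : ℂ → ℂ) (hf : IsHarmonicOn f (ball (0 : ℂ) 1)) (β : ℝ)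
    (hβ : ∀ z ∈ ball (0 : ℂ) 1, (1 - ‖z‖ ^ 2) * Lam f z ≤ β) :
    ∀ r : ℝ, 0 < r → r < 1 →
      ((1 / (2 * π)) *
          ∫ θ in (0:ℝ)..(2 * π),
            ‖f ((r : ℂ) * Complex.exp ((θ : ℂ) * Complex.I)) - f 0‖ ^ 2
        ≤ β ^ 2 * ∑' n : ℕ, r ^ (2 * (n + 1)) / ((n : ℝ) + 1)) ∧
      (∑' n : ℕ, r ^ (2 * (n + 1)) / ((n : ℝ) + 1)) = Real.log (1 / (1 - r ^ 2)) := by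
  intro r hr0 hr1
  have hsum := tsum_pow_two_mul_div_eq_log (abs_lt.mpr ⟨by linarith, hr1⟩)
  refine ⟨?_, hsum⟩
  have h := circleAverage_le_of_laplacian_le ((hf.1.sub contDiffOn_const).norm_sq ℝ)
    (fun z hz => laplacian_norm_sub_sq_le_of_bloch hf hβ (f 0) hz) hr0.le hr1
  simpa [hsum, circleAverage_def, circleMap_zero] using h
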